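/- Configurational temperature identity: Let T > 0 and let U : R^d -> R be differentiable with Z := integral over R^d of exp( -U(theta) / T ) dtheta finite and positive; let rho(theta) = exp( -U(theta) / T ) / Z be the Gibbs density. Assume that the vector field theta |-> theta * exp( -U(theta) / T ) has Lebesgue-integrable divergence whose integral over R^d is zero, and that theta |-> <theta, grad U(theta)> is rho-integrable. Then the expected configurational temperature satisfies E_{theta ~ rho}[ <theta, grad U(theta)> / d ] = T, i.e. integral <theta, grad U(theta)> rho(theta) dtheta = T * d. -/

import Mathlib

/-! Differentiating the radial field `θ ↦ θ · e^{-U(θ)/T}` gives the divergence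
`(d - ⟨θ, ∇U(θ)⟩ / T) · e^{-U(θ)/T}`. Its total integral vanishes by hypothesis, so
`∫ ⟨θ, ∇U⟩ e^{-U/T} = T d Z`, and dividing by `Z` gives the identity. -/

open MeasureTheory Real

theorem fderiv_exp_neg_div_apply {E : Type*} [NormedAddCommGroup E] [NormedSpace ℝ E]
    {U : E → ℝ} {x : E} (hU : DifferentiableAt ℝ U x) (T : ℝ) (v : E) :
    fderiv ℝ (fun y => exp (-U y / T)) x v = -(fderiv ℝ U x v / T) * exp (-U x / T) := by
  have h : HasFDerivAt (fun y => exp (-U y / T)) _ x := (hU.hasFDerivAt.neg.mul_const T⁻¹).exp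
  rw [h.fderiv]
  simp [div_eq_mul_inv]
  ring

section CoordinateSpace

variable {ι : Type*} [Fintype ι] [DecidableEq ι]

theorem ContinuousLinearMap.sum_mul_apply_single (L : (ι → ℝ) →L[ℝ] ℝ) (θ : ι → ℝ) :
    ∑ j, θ j * L (Pi.single j 1) = L θ := by
  conv_rhs => rw [← Finset.univ_sum_single θ]
  rw [map_sum]
  refine Finset.sum_congr rfl fun j _ => ?_
  rw [← smul_eq_mul, ← map_smul, ← Pi.single_smul', smul_eq_mul, mul_one]

theorem sum_fderiv_mul_coord_apply_single {g : (ι → ℝ) → ℝ} {θ : ι → ℝ}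
    (hg : DifferentiableAt ℝ g θ) :
    ∑ j, fderiv ℝ (fun y => g y * y j) θ (Pi.single j 1)
      = Fintype.card ι * g θ + fderiv ℝ g θ θ := by
  have hcoord : ∀ j, fderiv ℝ (fun y => g y * y j) θ (Pi.single j 1)
      = g θ + θ j * fderiv ℝ g θ (Pi.single j 1) := by
    intro j
    have h : HasFDerivAt (fun y => g y * y j) _ θ := hg.hasFDerivAt.mul (hasFDerivAt_apply j θ)
    rw [h.fderiv]
    simp
  simp [hcoord, Finset.sum_add_distrib, ContinuousLinearMap.sum_mul_apply_single]

theorem sum_fderiv_exp_neg_div_mul_coord_apply_single {U : (ι → ℝ) → ℝ} {θ : ι → ℝ}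
    (hU : DifferentiableAt ℝ U θ) (T : ℝ) :
    ∑ j, fderiv ℝ (fun y => exp (-U y / T) * y j) θ (Pi.single j 1)
      = Fintype.card ι * exp (-U θ / T) - fderiv ℝ U θ θ / T * exp (-U θ / T) := by
  rw [sum_fderiv_mul_coord_apply_single (g := fun y => exp (-U y / T)) (by fun_prop),
    fderiv_exp_neg_div_apply hU]
  ring

theorem integral_fderiv_apply_self_mul_exp_neg_div {T : ℝ} (hT : T ≠ 0) {U : (ι → ℝ) → ℝ}
    (hU : Differentiable ℝ U)
    (hgibbs : Integrable fun θ => exp (-U θ / T))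
    (hvirial : Integrable fun θ => fderiv ℝ U θ θ * exp (-U θ / T))
    (hdiv : ∫ θ, ∑ j, fderiv ℝ (fun y => exp (-U y / T) * y j) θ (Pi.single j 1) = 0) :
    ∫ θ, fderiv ℝ U θ θ * exp (-U θ / T) = T * Fintype.card ι * ∫ θ, exp (-U θ / T) := by
  simp_rw [sum_fderiv_exp_neg_div_mul_coord_apply_single (hU _), ← mul_div_right_comm] at hdiv
  rw [integral_sub (hgibbs.const_mul _) (hvirial.div_const T), integral_const_mul,
    integral_div, sub_eq_zero] at hdiv
  rw [mul_assoc, hdiv]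
  field_simp

end CoordinateSpace

theorem configurational_temperature_general
    {d : ℕ}
    (T : ℝ) (hT : 0 < T)
    (U : (Fin d → ℝ) → ℝ) (hU : Differentiable ℝ U)
    (Z : ℝ) (hZdef : Z = ∫ θ : Fin d → ℝ, Real.exp (-U θ / T))
    (hZint : Integrable (fun θ : Fin d → ℝ => Real.exp (-U θ / T)))
    (hZpos : 0 < Z)
    (hdivzero : (∫ θ : Fin d → ℝ,
      ∑ j, fderiv ℝ (fun y => Real.exp (-U y / T) * y j) θ (Pi.single j 1)) = 0)
    -- `⟨θ, ∇U(θ)⟩` is ρ-integrable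
    (hint : Integrable (fun θ : Fin d → ℝ =>
      (∑ j, θ j * fderiv ℝ U θ (Pi.single j 1)) * (Real.exp (-U θ / T) / Z))) :
    (∫ θ : Fin d → ℝ,
      (∑ j, θ j * fderiv ℝ U θ (Pi.single j 1)) * (Real.exp (-U θ / T) / Z)) = T * d := by
  simp_rw [ContinuousLinearMap.sum_mul_apply_single, ← mul_div_assoc] at hint ⊢
  have hvirial : Integrable fun θ => fderiv ℝ U θ θ * exp (-U θ / T) := by
    simpa [div_mul_cancel₀ _ hZpos.ne'] using hint.mul_const Z
  rw [integral_div, integral_fderiv_apply_self_mul_exp_neg_div hT.ne' hU hZint hvirial hdivzero,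
    ← hZdef, Fintype.card_fin]
  field_simp

/-- Configurational temperature identity: for the Gibbs density
`ρ(θ) = exp(-U(θ)/T) / Z`, assuming the vector field `θ ↦ θ · exp(-U(θ)/T)` has
integrable divergence with vanishing total integral, the expected configurational
temperature `E_ρ[⟨θ, ∇U(θ)⟩ / d]` equals `T`, i.e. `∫ ⟨θ, ∇U(θ)⟩ ρ(θ) dθ = T·d`. -/
theorem configurational_temperature
    {d : ℕ}
    (T : ℝ) (hT : 0 < T)
    (U : (Fin d → ℝ) → ℝ) (hU : Differentiable ℝ U)
    (Z : ℝ) (hZdef : Z = ∫ θ : Fin d → ℝ, Real.exp (-U θ / T))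
    (hZint : Integrable (fun θ : Fin d → ℝ => Real.exp (-U θ / T)))
    (hZpos : 0 < Z)
    -- the vector field `θ ↦ θ · exp(-U(θ)/T)` has integrable divergence with zero total integral
    (hdivint : Integrable (fun θ : Fin d → ℝ =>
      ∑ j, fderiv ℝ (fun y => Real.exp (-U y / T) * y j) θ (Pi.single j 1)))
    (hdivzero : (∫ θ : Fin d → ℝ,
      ∑ j, fderiv ℝ (fun y => Real.exp (-U y / T) * y j) θ (Pi.single j 1)) = 0)
    -- `⟨θ, ∇U(θ)⟩` is ρ-integrable
    (hint : Integrable (fun θ : Fin d → ℝ =>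
      (∑ j, θ j * fderiv ℝ U θ (Pi.single j 1)) * (Real.exp (-U θ / T) / Z))) :
    (∫ θ : Fin d → ℝ,
      (∑ j, θ j * fderiv ℝ U θ (Pi.single j 1)) * (Real.exp (-U θ / T) / Z)) = T * d :=
  configurational_temperature_general T hT U hU Z hZdef hZint hZpos hdivzero hint
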